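/- Value of the constrained minimum in Lemma 1(a): for every probability measure q ∈ F_cut, KL(q ‖ π) = KL(μ ‖ π.fst) + ∫_Φ KL(q(·|φ) ‖ π(·|φ)) dμ(φ); in particular the minimum of KL(q ‖ π) over q ∈ F_cut equals KL(μ ‖ π.fst) and is attained at the cut posterior: KL(π_cut ‖ π) = KL(μ ‖ π.fst). -/

import Mathlib

/-!
Disintegrating `q = μ ⊗ q(·|·)` and `π = π.fst ⊗ π(·|·)`, the chain rule for the KL divergence
splits `KL(q‖π)` into `KL(μ‖π.fst)` plus the conditional divergence `KL(μ ⊗ q(·|·) ‖ μ ⊗ π(·|·))`.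
Since `∂(μ ⊗ κ)/∂(μ ⊗ η)(φ, h) = ∂κ(φ)/∂η(φ)(h)` for `μ`-a.e. absolutely continuous kernels,
the conditional term is `∫ KL(q(·|φ)‖π(·|φ)) dμ(φ)`; for the cut posterior the kernels
coincide and it vanishes.
-/

open MeasureTheory ProbabilityTheory
open scoped ENNReal NNReal Classical

/-- Kullback–Leibler divergence with values in `[0,∞]`: equal to `∫ log (dν/dρ) dν` when
`ν ≪ ρ` (and this integral is well defined), and `∞` otherwise. -/

noncomputable def klDiv {α : Type*} [MeasurableSpace α] (ν ρ : Measure α) : ℝ≥0∞ :=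
  if ν ≪ ρ ∧ Integrable (llr ν ρ) ν then ENNReal.ofReal (∫ x, llr ν ρ x ∂ν) else ∞

/- Mathlib's `InformationTheory.klDiv` adds the correction `ν.real univ - μ.real univ`, which
vanishes between measures of equal mass. -/
lemma klDiv_eq_informationTheory_klDiv {α : Type*} [MeasurableSpace α] {μ ν : Measure α}
    (h : μ Set.univ = ν Set.univ) : klDiv μ ν = InformationTheory.klDiv μ ν := by
  by_cases hμν : μ ≪ ν ∧ Integrable (llr μ ν) μ
  · rw [klDiv, if_pos hμν, InformationTheory.klDiv_of_ac_of_integrable hμν.1 hμν.2,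
      measureReal_def, measureReal_def, h, add_sub_cancel_right]
  · rw [klDiv, if_neg hμν, InformationTheory.klDiv_eq_top_iff.mpr (fun h h' => hμν ⟨h, h'⟩)]

section CompProdRight

variable {α β : Type*} {mα : MeasurableSpace α} {mβ : MeasurableSpace β}
  [MeasurableSpace.CountableOrCountablyGenerated α β]
  {μ : Measure α} [IsFiniteMeasure μ] {κ η : Kernel α β} [IsFiniteKernel κ] [IsFiniteKernel η]

lemma ProbabilityTheory.rnDeriv_measure_compProd_right (h : ∀ᵐ a ∂μ, κ a ≪ η a) :
    (μ ⊗ₘ κ).rnDeriv (μ ⊗ₘ η) =ᵐ[μ ⊗ₘ η] fun p => κ.rnDeriv η p.1 p.2 := by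
  have hκ : μ ⊗ₘ κ = μ ⊗ₘ η.withDensity (κ.rnDeriv η) :=
    Measure.compProd_congr (h.mono fun a ha => (Kernel.withDensity_rnDeriv_eq ha).symm)
  rw [hκ, Measure.compProd_withDensity (Kernel.measurable_rnDeriv κ η)]
  exact Measure.rnDeriv_withDensity _ (Kernel.measurable_rnDeriv κ η)

lemma InformationTheory.klDiv_compProd_right_eq_lintegral :
    InformationTheory.klDiv (μ ⊗ₘ κ) (μ ⊗ₘ η) = ∫⁻ a, InformationTheory.klDiv (κ a) (η a) ∂μ := by
  by_cases hac : ∀ᵐ a ∂μ, κ a ≪ η a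
  · rw [InformationTheory.klDiv_eq_lintegral_klFun_of_ac
      (Measure.absolutelyContinuous_compProd_right_iff.mpr hac),
      lintegral_congr_ae (by
        filter_upwards [rnDeriv_measure_compProd_right hac] with p hp
        rw [hp]),
      Measure.lintegral_compProd (by fun_prop)]
    refine lintegral_congr_ae (hac.mono fun a ha => ?_)
    dsimp only
    rw [InformationTheory.klDiv_eq_lintegral_klFun_of_ac ha]
    refine lintegral_congr_ae ?_
    filter_upwards [Kernel.rnDeriv_eq_rnDeriv_measure (κ := κ) (η := η) (a := a)] with b hb
    rw [hb]
  · rw [InformationTheory.klDiv_of_not_ac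
      (mt Measure.absolutelyContinuous_compProd_right_iff.mp hac), eq_comm, eq_top_iff]
    have hS : MeasurableSet {a | ¬ κ a ≪ η a} :=
      (Kernel.measurableSet_absolutelyContinuous κ η).compl
    calc ∞ = ∫⁻ a, {a | ¬ κ a ≪ η a}.indicator (fun _ => ∞) a ∂μ := by
          rw [lintegral_indicator_const hS, ENNReal.top_mul (mt ae_iff.mpr hac)]
      _ ≤ ∫⁻ a, InformationTheory.klDiv (κ a) (η a) ∂μ :=
          lintegral_mono (Set.indicator_le fun a ha => (InformationTheory.klDiv_of_not_ac ha).ge)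

end CompProdRight

lemma klDiv_compProd_eq_add_lintegral {α β : Type*} {mα : MeasurableSpace α}
    {mβ : MeasurableSpace β} [MeasurableSpace.CountableOrCountablyGenerated α β]
    (μ ν : Measure α) [IsProbabilityMeasure μ] [IsProbabilityMeasure ν]
    (κ η : Kernel α β) [IsMarkovKernel κ] [IsMarkovKernel η] :
    klDiv (μ ⊗ₘ κ) (ν ⊗ₘ η) = klDiv μ ν + ∫⁻ a, klDiv (κ a) (η a) ∂μ := by
  simp only [klDiv_eq_informationTheory_klDiv, measure_univ]
  rw [InformationTheory.klDiv_compProd_eq_add,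
    InformationTheory.klDiv_compProd_right_eq_lintegral]

theorem klDiv_value_on_cut_family_general
    {Φ H : Type*} [MeasurableSpace Φ]
    [MeasurableSpace H] [StandardBorelSpace H] [Nonempty H]
    (π : Measure (Φ × H)) [IsProbabilityMeasure π]
    (μ : Measure Φ) [IsProbabilityMeasure μ] :
    (∀ (q : Measure (Φ × H)) [IsProbabilityMeasure q], q.fst = μ →
        klDiv q π = klDiv μ π.fst + ∫⁻ φ, klDiv (q.condKernel φ) (π.condKernel φ) ∂μ) ∧
    klDiv (μ ⊗ₘ π.condKernel) π = klDiv μ π.fst := by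
  have hπ : π.fst ⊗ₘ π.condKernel = π := π.disintegrate π.condKernel
  refine ⟨fun q _ hq => ?_, ?_⟩
  · calc klDiv q π = klDiv (μ ⊗ₘ q.condKernel) (π.fst ⊗ₘ π.condKernel) := by
          rw [← hq, q.disintegrate, hπ]
      _ = _ := klDiv_compProd_eq_add_lintegral _ _ _ _
  · calc klDiv (μ ⊗ₘ π.condKernel) π
          = klDiv (μ ⊗ₘ π.condKernel) (π.fst ⊗ₘ π.condKernel) := by rw [hπ]
      _ = klDiv μ π.fst := by
          simp only [klDiv_eq_informationTheory_klDiv, measure_univ,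
            InformationTheory.klDiv_compProd_left]

/-- Value of the constrained minimum in Lemma 1(a): every `q` with first marginal `μ` satisfies
`KL(q‖π) = KL(μ‖π.fst) + ∫ KL(q(·|φ)‖π(·|φ)) dμ(φ)`; in particular the minimum over the family
`F_cut` equals `KL(μ‖π.fst)` and is attained at the cut posterior `π_cut = μ ⊗ₘ π.condKernel`. -/
theorem klDiv_value_on_cut_family
    {Φ H : Type*} [MeasurableSpace Φ] [StandardBorelSpace Φ]
    [MeasurableSpace H] [StandardBorelSpace H] [Nonempty H]
    (π : Measure (Φ × H)) [IsProbabilityMeasure π]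
    (μ : Measure Φ) [IsProbabilityMeasure μ] :
    (∀ (q : Measure (Φ × H)) [IsProbabilityMeasure q], q.fst = μ →
        klDiv q π = klDiv μ π.fst + ∫⁻ φ, klDiv (q.condKernel φ) (π.condKernel φ) ∂μ) ∧
    klDiv (μ ⊗ₘ π.condKernel) π = klDiv μ π.fst :=
  klDiv_value_on_cut_family_general π μ
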